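/- For the pairwise-comparison process with two strategies A and B in a population of size N ≥ 2 and selection intensity β > 0, the fixation probability of a single A-mutant among B-players exceeds that of a single B-mutant among A-players, ρ_{B,A} > ρ_{A,B}, if and only if (N−2)(π_AA − π_BB) + N(π_AB − π_BA) > 0. -/

import Mathlib

/-!
Exchanging the roles of A and B turns the transition ratio at `k` A-players into the inverse
of the original one at `N - k`. Reindexing the sum defining `ρ_{A,B}` therefore gives the
classical ratio `ρ_{A,B} / ρ_{B,A} = ∏_{j=1}^{N-1} T⁻(j)/T⁺(j) = exp (-β ∑_j (Π_A(j) - Π_B(j)))`.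
The payoff difference is affine in `j`, and its sum over `1 ≤ j ≤ N - 1` is
`((N - 2)(π_AA - π_BB) + N (π_AB - π_BA)) / 2`.
-/

open Finset Real

/-- Average payoff of strategy A when `k` individuals (out of `N`) use A,
given pairwise payoffs `πAA` (A vs A) and `πAB` (A vs B). -/
noncomputable def PiA (N : ℕ) (pAA pAB : ℝ) (k : ℕ) : ℝ :=
  (((k : ℝ) - 1) * pAA + ((N : ℝ) - (k : ℝ)) * pAB) / ((N : ℝ) - 1)

/-- Average payoff of strategy B when `k` individuals (out of `N`) use A,
given pairwise payoffs `πBA` (B vs A) and `πBB` (B vs B). -/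
noncomputable def PiB (N : ℕ) (pBA pBB : ℝ) (k : ℕ) : ℝ :=
  ((k : ℝ) * pBA + ((N : ℝ) - (k : ℝ) - 1) * pBB) / ((N : ℝ) - 1)

/-- Fixation probability `ρ_{B,A}` of a single A-mutant in a population of `N − 1`
B-players under the pairwise-comparison rule with selection intensity `β`, where
`πAA, πAB, πBA, πBB` are the pairwise payoffs.  (The fixation probability `ρ_{A,B}`
of a single B-mutant among A-players is obtained by exchanging the roles of A and B,
i.e. `rhoFix N β πBB πBA πAB πAA`.) -/
noncomputable def rhoFix (N : ℕ) (β pAA pAB pBA pBB : ℝ) : ℝ :=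
  (1 + ∑ i ∈ Finset.Icc 1 (N - 1), ∏ j ∈ Finset.Icc 1 i,
      Real.exp (-β * (PiA N pAA pAB j - PiB N pBA pBB j)))⁻¹

theorem prod_Icc_sub_mul_prod_Icc_reflect {M : Type*} [CommMonoid M] (r : ℕ → M) {i n : ℕ}
    (hi : i ≤ n) :
    (∏ j ∈ Icc 1 (n - i), r j) * ∏ j ∈ Icc 1 i, r (n + 1 - j) = ∏ j ∈ Icc 1 n, r j := by
  induction i with
  | zero => simp
  | succ i ih =>
    obtain ⟨k, rfl⟩ : ∃ k, n = k + i + 1 := ⟨n - i - 1, by omega⟩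
    rw [prod_Icc_succ_top (by omega), ← ih (by omega),
      show k + i + 1 - i = k + 1 by omega, prod_Icc_succ_top (by omega),
      show k + i + 1 + 1 - (i + 1) = k + 1 by omega, show k + i + 1 - (i + 1) = k by omega]
    ac_rfl

theorem one_add_sum_Icc_prod_Icc {M : Type*} [CommSemiring M] (f : ℕ → M) (n : ℕ) :
    1 + ∑ i ∈ Icc 1 n, ∏ j ∈ Icc 1 i, f j = ∑ i ∈ range (n + 1), ∏ j ∈ Icc 1 i, f j := by
  rw [sum_range_succ', ← Ico_add_one_right_eq_Icc, sum_Ico_eq_sum_range]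
  simp [add_comm]

theorem one_add_sum_prod_Icc_inv_reflect {K : Type*} [Semifield K] (r : ℕ → K) (n : ℕ)
    (hr : ∀ j ∈ Icc 1 n, r j ≠ 0) :
    1 + ∑ i ∈ Icc 1 n, ∏ j ∈ Icc 1 i, (r (n + 1 - j))⁻¹
      = (∏ j ∈ Icc 1 n, r j)⁻¹ * (1 + ∑ i ∈ Icc 1 n, ∏ j ∈ Icc 1 i, r j) := by
  rw [one_add_sum_Icc_prod_Icc, one_add_sum_Icc_prod_Icc, mul_sum,
    ← sum_range_reflect (fun i => _ * ∏ j ∈ Icc 1 i, r j)]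
  refine sum_congr rfl fun i hi => ?_
  have hin : i ≤ n := Nat.lt_succ_iff.mp (mem_range.mp hi)
  have hrest : ∏ j ∈ Icc 1 (n - i), r j ≠ 0 :=
    prod_ne_zero_iff.mpr fun j hj => hr j (Icc_subset_Icc_right (Nat.sub_le n i) hj)
  rw [prod_inv_distrib, ← prod_Icc_sub_mul_prod_Icc_reflect r hin, Nat.add_sub_cancel,
    mul_inv, mul_comm, mul_inv_cancel_left₀ hrest]

theorem sum_Icc_one_cast_mul_two {R : Type*} [CommSemiring R] (n : ℕ) :
    (∑ j ∈ Icc 1 n, (j : R)) * 2 = n * (n + 1) := by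
  induction n with
  | zero => simp
  | succ n ih =>
    rw [sum_Icc_succ_top (by omega), add_mul, ih]
    push_cast; ring

theorem PiA_swap {N k : ℕ} (hk : k ≤ N) (pBA pBB : ℝ) :
    PiA N pBB pBA k = PiB N pBA pBB (N - k) := by
  simp only [PiA, PiB, Nat.cast_sub hk]
  ring

theorem PiB_swap {N k : ℕ} (hk : k ≤ N) (pAA pAB : ℝ) :
    PiB N pAB pAA k = PiA N pAA pAB (N - k) := by
  simp only [PiA, PiB, Nat.cast_sub hk]
  ring

theorem rhoFix_swap_eq_exp_mul (N : ℕ) (β pAA pAB pBA pBB : ℝ) :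
    rhoFix N β pBB pBA pAB pAA
      = exp (-β * ∑ j ∈ Icc 1 (N - 1), (PiA N pAA pAB j - PiB N pBA pBB j))
        * rhoFix N β pAA pAB pBA pBB := by
  set T : ℕ → ℝ := fun j => exp (-β * (PiA N pAA pAB j - PiB N pBA pBB j))
  have hswap : ∀ i ∈ Icc 1 (N - 1), ∀ j ∈ Icc 1 i,
      exp (-β * (PiA N pBB pBA j - PiB N pAB pAA j)) = (T (N - 1 + 1 - j))⁻¹ := by
    intro i hi j hj
    have hjN : j ≤ N := by grind
    rw [PiA_swap hjN, PiB_swap hjN, ← exp_neg, show N - 1 + 1 - j = N - j by grind]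
    ring_nf
  unfold rhoFix
  rw [sum_congr rfl fun i hi => prod_congr rfl (hswap i hi),
    one_add_sum_prod_Icc_inv_reflect T _ fun j _ => (exp_pos _).ne', mul_inv, inv_inv,
    mul_sum, exp_sum]

theorem rhoFix_pos (N : ℕ) (β pAA pAB pBA pBB : ℝ) : 0 < rhoFix N β pAA pAB pBA pBB := by
  unfold rhoFix
  positivity

theorem sum_Icc_PiA_sub_PiB {N : ℕ} (hN : 2 ≤ N) (pAA pAB pBA pBB : ℝ) :
    ∑ j ∈ Icc 1 (N - 1), (PiA N pAA pAB j - PiB N pBA pBB j)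
      = ((N - 2) * (pAA - pBB) + N * (pAB - pBA)) / 2 := by
  have hN1 : (N : ℝ) - 1 ≠ 0 := by
    rw [sub_ne_zero]; exact_mod_cast (by omega : N ≠ 1)
  have hgap : ∀ j : ℕ, PiA N pAA pAB j - PiB N pBA pBB j
      = ((pAA - pAB - pBA + pBB) * j + (N * pAB - pAA - (N - 1) * pBB)) / (N - 1) := by
    intro j
    simp only [PiA, PiB]
    ring
  have hgauss := sum_Icc_one_cast_mul_two (R := ℝ) (N - 1)
  rw [Nat.cast_sub (by omega : 1 ≤ N), Nat.cast_one] at hgauss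
  rw [sum_congr rfl fun j _ => hgap j, ← sum_div, sum_add_distrib, ← mul_sum, sum_const,
    Nat.card_Icc, Nat.add_sub_cancel, nsmul_eq_mul, Nat.cast_sub (by omega : 1 ≤ N)]
  field_simp
  linear_combination (pAA - pAB - pBA + pBB) * hgauss

/-- **Comparison of fixation probabilities.**
For the pairwise-comparison process with two strategies A and B in a population of
size `N ≥ 2` and selection intensity `β > 0`, the fixation probability of a single
A-mutant among B-players exceeds that of a single B-mutant among A-players,
`ρ_{B,A} > ρ_{A,B}`, iff `(N−2)(π_AA − π_BB) + N(π_AB − π_BA) > 0`. -/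
theorem fixation_prob_comparison (N : ℕ) (hN : 2 ≤ N) (β : ℝ) (hβ : 0 < β)
    (pAA pAB pBA pBB : ℝ) :
    rhoFix N β pAA pAB pBA pBB > rhoFix N β pBB pBA pAB pAA
      ↔ ((N : ℝ) - 2) * (pAA - pBB) + (N : ℝ) * (pAB - pBA) > 0 := by
  rw [rhoFix_swap_eq_exp_mul N β pAA pAB pBA pBB, sum_Icc_PiA_sub_PiB hN, gt_iff_lt,
    mul_lt_iff_lt_one_left (rhoFix_pos ..), exp_lt_one_iff, neg_mul, neg_lt_zero,
    mul_pos_iff_of_pos_left hβ, div_pos_iff_of_pos_right two_pos]
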